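/- arXiv:1906.06118 — 5 statements merged into one kernel-verified Lean document; each statement's English description precedes it below -/
import Mathlib

section
/- In any 2-dimensional normed space X there exist three points that are pairwise equidistant with common distance 1; that is, the equilateral dimension of any planar normed space is at least 3. -/
/-- In any 2-dimensional normed space there exist three points pairwise at distance 1,
hence the equilateral dimension is at least 3. -/
theorem equilateral_dimension_planar (X : Type*) [NormedAddCommGroup X] [NormedSpace ℝ X]
    (hdim : Module.finrank ℝ X = 2) :
    ∃ x y z : X, ‖x - y‖ = 1 ∧ ‖y - z‖ = 1 ∧ ‖x - z‖ = 1 := by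
  have hfd : FiniteDimensional ℝ X := FiniteDimensional.of_finrank_pos (by omega)
  have hrank : 1 < Module.rank ℝ X := by
    rw [← Module.finrank_eq_rank, hdim]; exact_mod_cast one_lt_two
  have hnt : Nontrivial X := by
    apply Module.nontrivial_of_finrank_pos (R := ℝ); omega
  obtain ⟨y, hy⟩ := exists_norm_eq X (zero_le_one' ℝ)
  have hconn : IsPreconnected (Metric.sphere (0 : X) 1) :=
    (isConnected_sphere hrank 0 zero_le_one).isPreconnected
  have hy' : y ∈ Metric.sphere (0 : X) 1 := by simpa [mem_sphere_iff_norm] using hy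
  have hny : -y ∈ Metric.sphere (0 : X) 1 := by
    simpa [mem_sphere_iff_norm, norm_neg] using hy
  have := hconn.intermediate_value₂ hy' hny
    (f := fun v => ‖v - y‖) (g := fun _ => (1 : ℝ))
    ((continuous_id.sub continuous_const).norm.continuousOn) continuousOn_const
    (by simp) (by
      have : ‖-y - y‖ = 2 := by
        have : -y - y = -(2 : ℝ) • y := by module
        rw [this, norm_smul, hy]; simp
      rw [this]; norm_num)
  obtain ⟨z, hz, hzy⟩ := this
  refine ⟨0, y, z, by simpa using hy, by rwa [norm_sub_rev], ?_⟩
  simpa [mem_sphere_iff_norm, norm_sub_rev] using hz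
end

section
/- Let B ⊂ ℝ^n be a 0-symmetric convex body and H a linear hyperplane with e ∉ H. If for two parameters 0 ≤ t' < t* the sections B ∩ (t'·e + H) and B ∩ (t*·e + H) are translates of one another (equal up to translation, both nonempty with nonempty relative interior in their affine hyperplanes), then the central section B ∩ H is also a translate of B ∩ (t*·e + H). -/
/-!
Write `S t` for the section of `B` at height `t` and `K = S t⋆`. Convexity of `B` makes
`t ↦ S t` concave for Minkowski addition, and symmetry of `B` gives `S (-t) = -S t`.
With `b = (t⋆ - t') / t⋆` this yields `b • S 0 + (1 - b) • K ⊆ S t' = K + v`, and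
Rådström's cancellation law for compact convex summands gives `S 0 ⊆ K + b⁻¹ • v`.
Conversely `½ K + ½ (-K) ⊆ S 0 ⊆ ½ K + ½ K + b⁻¹ • v`; cancelling `½ K` gives
`-K ⊆ K + 2 b⁻¹ • v`, which forces equality, and then `K + b⁻¹ • v = ½ K + ½ (-K) ⊆ S 0`.
-/

open Set Pointwise

theorem Set.neg_eq_add_singleton_of_neg_subset {E : Type*} [AddCommGroup E] {K : Set E} {u : E}
    (h : -K ⊆ K + {u}) : -K = K + {u} := by
  refine h.antisymm ?_
  have hK : K ⊆ -K + {-u} := by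
    have := neg_subset_neg.2 h
    rwa [neg_neg, neg_add, neg_singleton] at this
  calc K + {u} ⊆ -K + {-u} + {u} := add_subset_add_right hK
    _ = -K := by rw [add_assoc, singleton_add_singleton, neg_add_cancel, singleton_zero, add_zero]

section Module

variable {E : Type*} [AddCommGroup E] [Module ℝ E]

theorem Convex.natCast_smul_singleton_add_subset {x : E} {Y Z : Set E} (hY : Convex ℝ Y)
    (h : {x} + Z ⊆ Y + Z) {n : ℕ} (hn : 1 ≤ n) :
    (n : ℝ) • ({x} : Set E) + Z ⊆ (n : ℝ) • Y + Z := by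
  induction n, hn using Nat.le_induction with
  | base => simpa using h
  | succ n _ ih =>
    calc ((n + 1 : ℕ) : ℝ) • ({x} : Set E) + Z = (n : ℝ) • ({x} : Set E) + ({x} + Z) := by
          rw [smul_set_singleton, smul_set_singleton, Nat.cast_succ, add_smul, one_smul,
            ← singleton_add_singleton, add_assoc]
      _ ⊆ (n : ℝ) • ({x} : Set E) + (Y + Z) := add_subset_add_left h
      _ = Y + ((n : ℝ) • ({x} : Set E) + Z) := by abel
      _ ⊆ Y + ((n : ℝ) • Y + Z) := add_subset_add_left ih
      _ = ((n + 1 : ℕ) : ℝ) • Y + Z := by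
          rw [Nat.cast_succ, hY.add_smul n.cast_nonneg zero_le_one, one_smul]; abel

def parallelSection (B : Set E) (H : Submodule ℝ E) (e : E) (t : ℝ) : Set E :=
  B ∩ {x | x - t • e ∈ H}

variable {B : Set E} {H : Submodule ℝ E} {e : E}

theorem parallelSection_zero : parallelSection B H e 0 = B ∩ H := by
  simp [parallelSection]

theorem smul_add_smul_parallelSection_subset (hB : Convex ℝ B) {a b : ℝ} (ha : 0 ≤ a)
    (hb : 0 ≤ b) (hab : a + b = 1) (s t : ℝ) :
    a • parallelSection B H e s + b • parallelSection B H e t ⊆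
      parallelSection B H e (a * s + b * t) := by
  rintro _ ⟨_, ⟨x, ⟨hxB, hxH⟩, rfl⟩, _, ⟨y, ⟨hyB, hyH⟩, rfl⟩, rfl⟩
  refine ⟨hB hxB hyB ha hb hab, ?_⟩
  have : a • x + b • y - (a * s + b * t) • e = a • (x - s • e) + b • (y - t • e) := by module
  simp only [mem_ofPred_eq, this]
  exact H.add_mem (H.smul_mem a hxH) (H.smul_mem b hyH)

theorem convex_parallelSection (hB : Convex ℝ B) (t : ℝ) :
    Convex ℝ (parallelSection B H e t) := by
  refine convex_iff_pointwise_add_subset.2 fun a b ha hb hab => ?_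
  simpa [← add_mul, hab] using
    smul_add_smul_parallelSection_subset (H := H) (e := e) hB ha hb hab t t

theorem neg_parallelSection (hB : ∀ x ∈ B, -x ∈ B) (t : ℝ) :
    -parallelSection B H e t = parallelSection B H e (-t) := by
  ext x
  have : -x - t • e = -(x - (-t) • e) := by module
  simp only [parallelSection, mem_neg, mem_inter_iff, mem_ofPred_eq, this, H.neg_mem_iff]
  exact and_congr_left' ⟨fun h => by simpa using hB _ h, hB x⟩

end Module

section Normed

variable {E : Type*} [NormedAddCommGroup E] [NormedSpace ℝ E]

theorem Convex.subset_of_add_subset_add {X Y Z : Set E} (hY : Convex ℝ Y) (hYc : IsClosed Y)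
    (hZ : Bornology.IsBounded Z) (hZne : Z.Nonempty) (h : X + Z ⊆ Y + Z) : X ⊆ Y := by
  intro x hx
  obtain ⟨z₀, hz₀⟩ := hZne
  obtain ⟨C, hC⟩ := hZ.exists_norm_le
  have hC0 : 0 ≤ C := (norm_nonneg _).trans (hC z₀ hz₀)
  rw [← hYc.closure_eq, Metric.mem_closure_iff]
  intro ε hε
  obtain ⟨n, hn⟩ := exists_nat_gt (2 * C / ε)
  have hn0 : (0 : ℝ) < n := (div_nonneg (by positivity) hε.le).trans_lt hn
  have hxZ : {x} + Z ⊆ Y + Z := (add_subset_add_right (singleton_subset_iff.2 hx)).trans h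
  obtain ⟨_, ⟨y, hy, rfl⟩, z, hz, hxyz⟩ :=
    hY.natCast_smul_singleton_add_subset hxZ (Nat.cast_pos.1 hn0)
      (add_mem_add (smul_mem_smul_set (mem_singleton x)) hz₀)
  refine ⟨y, hy, ?_⟩
  have : (n : ℝ) * dist x y ≤ 2 * C := by
    calc (n : ℝ) * dist x y = ‖z₀ - z‖ := by
          rw [dist_eq_norm, ← abs_of_pos hn0, ← Real.norm_eq_abs, ← norm_smul, smul_sub,
            norm_sub_rev z₀]
          congr 1
          linear_combination (norm := module) hxyz.symm
      _ ≤ ‖z₀‖ + ‖z‖ := norm_sub_le _ _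
      _ ≤ 2 * C := by linarith [hC z₀ hz₀, hC z hz]
  rw [div_lt_iff₀ hε] at hn
  nlinarith [dist_nonneg (x := x) (y := y)]

theorem Convex.subset_add_singleton_of_smul_add_smul_subset {X K : Set E} {v : E} {b : ℝ}
    (hK : Convex ℝ K) (hKc : IsCompact K) (hKne : K.Nonempty) (hb0 : 0 < b) (hb1 : b ≤ 1)
    (h : b • X + (1 - b) • K ⊆ K + {v}) : X ⊆ K + {b⁻¹ • v} := by
  have hbX : b • X ⊆ b • K + {v} := by
    refine (hK.smul b |>.add (convex_singleton v)).subset_of_add_subset_add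
      ((hKc.smul b).add isCompact_singleton).isClosed (hKc.smul (1 - b)).isBounded
      hKne.smul_set ?_
    rwa [add_right_comm, ← hK.add_smul hb0.le (sub_nonneg.2 hb1), add_sub_cancel, one_smul]
  rwa [← smul_set_subset_smul_set_iff₀ hb0.ne', smul_add, smul_set_singleton,
    smul_inv_smul₀ hb0.ne']

theorem Convex.half_smul_add_half_smul_neg_eq_of_subset {K : Set E} {w : E} (hK : Convex ℝ K)
    (hKc : IsCompact K) (hKne : K.Nonempty) (h : (2⁻¹ : ℝ) • K + (2⁻¹ : ℝ) • -K ⊆ K + {w}) :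
    (2⁻¹ : ℝ) • K + (2⁻¹ : ℝ) • -K = K + {w} := by
  have hsplit : K = (2⁻¹ : ℝ) • K + (2⁻¹ : ℝ) • K := by
    rw [← hK.add_smul (by norm_num) (by norm_num)]; norm_num
  have hhalf : (2⁻¹ : ℝ) • -K ⊆ (2⁻¹ : ℝ) • K + {w} := by
    refine (hK.smul (2⁻¹ : ℝ) |>.add (convex_singleton w)).subset_of_add_subset_add
      ((hKc.smul (2⁻¹ : ℝ)).add isCompact_singleton).isClosed (hKc.smul (2⁻¹ : ℝ)).isBounded
      hKne.smul_set ?_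
    calc (2⁻¹ : ℝ) • -K + (2⁻¹ : ℝ) • K = (2⁻¹ : ℝ) • K + (2⁻¹ : ℝ) • -K := add_comm _ _
      _ ⊆ K + {w} := h
      _ = (2⁻¹ : ℝ) • K + {w} + (2⁻¹ : ℝ) • K := by rw [add_right_comm, ← hsplit]
  have hneg : -K = K + {(2 : ℝ) • w} := by
    refine neg_eq_add_singleton_of_neg_subset ?_
    rwa [← smul_set_subset_smul_set_iff₀ (inv_ne_zero (two_ne_zero' ℝ)), smul_add,
      smul_set_singleton, inv_smul_smul₀ (two_ne_zero' ℝ)]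
  rw [hneg, smul_add, smul_set_singleton, inv_smul_smul₀ (two_ne_zero' ℝ), ← add_assoc,
    ← hsplit]

theorem isCompact_parallelSection [FiniteDimensional ℝ E] {B : Set E} {H : Submodule ℝ E}
    {e : E} (hB : IsCompact B) (t : ℝ) :
    IsCompact (parallelSection B H e t) :=
  hB.inter_right (H.closed_of_finiteDimensional.preimage (continuous_sub_right _))

end Normed

theorem central_section_translate_general {E : Type*} [NormedAddCommGroup E] [NormedSpace ℝ E]
    [FiniteDimensional ℝ E]
    (B : Set E) (hBconv : Convex ℝ B) (hBcomp : IsCompact B)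
    (hBsymm : ∀ x ∈ B, -x ∈ B)
    (H : Submodule ℝ E)
    (e : E) (t' tstar : ℝ) (ht' : 0 ≤ t') (htt : t' < tstar)
    (hne2 : (B ∩ {x | x - tstar • e ∈ H}).Nonempty)
    (htrans : ∃ v : E, B ∩ {x | x - t' • e ∈ H}
      = (fun z => z + v) '' (B ∩ {x | x - tstar • e ∈ H})) :
    ∃ v : E, B ∩ (H : Set E) = (fun z => z + v) '' (B ∩ {x | x - tstar • e ∈ H}) := by
  obtain ⟨v, hv⟩ := htrans
  set K := parallelSection B H e tstar
  have hv' : parallelSection B H e t' = K + {v} := by rw [add_singleton]; exact hv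
  have hK : Convex ℝ K := convex_parallelSection hBconv tstar
  have hKc : IsCompact K := isCompact_parallelSection hBcomp tstar
  have hts : 0 < tstar := ht'.trans_lt htt
  set b := (tstar - t') / tstar with hb
  have hb0 : 0 < b := div_pos (sub_pos.2 htt) hts
  have hb1 : b ≤ 1 := (div_le_one hts).2 (by linarith)
  have hcomb : b • parallelSection B H e 0 + (1 - b) • K ⊆ K + {v} := by
    rw [← hv']
    convert smul_add_smul_parallelSection_subset hBconv hb0.le (sub_nonneg.2 hb1)
      (add_sub_cancel b 1) 0 tstar using 2
    rw [hb]; field_simp; ring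
  have hsub : B ∩ H ⊆ K + {b⁻¹ • v} := by
    rw [← parallelSection_zero]
    exact hK.subset_add_singleton_of_smul_add_smul_subset hKc hne2 hb0 hb1 hcomb
  have hsymm : (2⁻¹ : ℝ) • K + (2⁻¹ : ℝ) • -K ⊆ B ∩ H := by
    rw [neg_parallelSection hBsymm, ← parallelSection_zero]
    convert smul_add_smul_parallelSection_subset (a := 2⁻¹) (b := 2⁻¹) hBconv (by norm_num)
      (by norm_num) (by norm_num) tstar (-tstar) using 2
    ring
  refine ⟨b⁻¹ • v, ?_⟩
  rw [← add_singleton]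
  exact hsub.antisymm ((hK.half_smul_add_half_smul_neg_eq_of_subset hKc hne2
    (hsymm.trans hsub)).symm.subset.trans hsymm)

/-- If two parallel sections of a 0-symmetric convex body at heights `0 ≤ t' < t⋆`
are translates of one another, then the central section is also a translate of the
section at height `t⋆`. -/
theorem central_section_translate {E : Type*} [NormedAddCommGroup E] [NormedSpace ℝ E]
    [FiniteDimensional ℝ E]
    (B : Set E) (hBconv : Convex ℝ B) (hBcomp : IsCompact B)
    (hBsymm : ∀ x ∈ B, -x ∈ B) (hB0 : 0 ∈ interior B)
    (H : Submodule ℝ E) (hH : Module.finrank ℝ H = Module.finrank ℝ E - 1)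
    (e : E) (he : e ∉ H) (t' tstar : ℝ) (ht' : 0 ≤ t') (htt : t' < tstar)
    (hne1 : (B ∩ {x | x - t' • e ∈ H}).Nonempty)
    (hne2 : (B ∩ {x | x - tstar • e ∈ H}).Nonempty)
    (hri1 : (intrinsicInterior ℝ (B ∩ {x | x - t' • e ∈ H})).Nonempty)
    (hri2 : (intrinsicInterior ℝ (B ∩ {x | x - tstar • e ∈ H})).Nonempty)
    (htrans : ∃ v : E, B ∩ {x | x - t' • e ∈ H}
      = (fun z => z + v) '' (B ∩ {x | x - tstar • e ∈ H})) :
    ∃ v : E, B ∩ (H : Set E) = (fun z => z + v) '' (B ∩ {x | x - tstar • e ∈ H}) :=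
  central_section_translate_general B hBconv hBcomp hBsymm H e t' tstar ht' htt hne2 htrans
end

section
/- Let B = conv((B²₂ × {0}) ∪ {(0,0,±1)}) ⊂ ℝ³ with associated norm ‖·‖_B, and let T be the triangle with vertices (√3/2, -1/2, 0), (-√3/2, -1/2, 0), (0, 1, 0). Then the translated scaled triangle T* = (1/√3)·T + (0, 0, (√3-1)/√3) is inscribed in B (all three vertices satisfy ‖v‖_B = 1) and has side length 1 in ‖·‖_B. -/
open Set

/-- The Euclidean unit disk in the horizontal plane of `ℝ³`. -/
def diskSet : Set (Fin 3 → ℝ) := {p | p 0 ^ 2 + p 1 ^ 2 ≤ 1 ∧ p 2 = 0}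

/-- The double cone over the Euclidean unit disk with apexes `(0,0,±1)`. -/
def Bcone : Set (Fin 3 → ℝ) :=
  convexHull ℝ (diskSet ∪ ({![0, 0, 1], ![0, 0, -1]} : Set (Fin 3 → ℝ)))

/-- Vertices of the equilateral triangle `T` in the horizontal plane. -/
noncomputable def vT : Fin 3 → (Fin 3 → ℝ) :=
  ![![Real.sqrt 3 / 2, -(1 / 2 : ℝ), 0], ![-(Real.sqrt 3 / 2), -(1 / 2 : ℝ), 0], ![0, 1, 0]]

/-- Vertices of the triangle `T⋆ = (1/√3)·T + (0,0,(√3-1)/√3)`. -/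
noncomputable def wT : Fin 3 → (Fin 3 → ℝ) :=
  fun i => (1 / Real.sqrt 3) • vT i + ![0, 0, (Real.sqrt 3 - 1) / Real.sqrt 3]

/-!
`Bcone` lies in the closed unit ball of the seminorm `√(x² + y²) + |z|` (a convex set
containing the disk and both apexes), so every point of `Bcone` at which this seminorm equals `1`
has gauge exactly `1`. The vertices of `T⋆` are the points `t • v + (1 - t) • (0,0,1)` with
`t = 1/√3` and `v` a vertex of `T` on the unit circle, where the seminorm is `t + (1 - t) = 1`;
its sides are `(1/√3) • (v - v')`, horizontal vectors of Euclidean length `1` because `T` has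
side `√3`.
-/

open scoped Pointwise

namespace Seminorm

variable {E : Type*} [AddCommGroup E] [Module ℝ E] {p : Seminorm ℝ E} {s : Set E} {x : E}

theorem le_gauge_of_subset_closedBall (hs : s ⊆ p.closedBall 0 1) (hx : x ∈ s) :
    p x ≤ gauge s x := by
  refine le_csInf ⟨1, one_pos, by rwa [one_smul]⟩ ?_
  rintro r ⟨hr, y, hy, rfl⟩
  have hpy : p y ≤ 1 := by simpa using hs hy
  rw [map_smul_eq_mul, Real.norm_of_nonneg hr.le]
  exact mul_le_of_le_one_right hr.le hpy

theorem gauge_eq_one_of_subset_closedBall (hs : s ⊆ p.closedBall 0 1) (hx : x ∈ s)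
    (hpx : p x = 1) : gauge s x = 1 :=
  le_antisymm (gauge_le_one_of_mem hx) (hpx ▸ le_gauge_of_subset_closedBall hs hx)

end Seminorm

noncomputable def horizontalProj : (Fin 3 → ℝ) →ₗ[ℝ] EuclideanSpace ℝ (Fin 2) :=
  (WithLp.linearEquiv 2 ℝ (Fin 2 → ℝ)).symm.toLinearMap ∘ₗ
    LinearMap.pi fun i => LinearMap.proj (Fin.castSucc i)

noncomputable def coneSeminorm : Seminorm ℝ (Fin 3 → ℝ) :=
  (normSeminorm ℝ _).comp horizontalProj + (normSeminorm ℝ ℝ).comp (LinearMap.proj 2)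

theorem coneSeminorm_apply (p : Fin 3 → ℝ) :
    coneSeminorm p = √(p 0 ^ 2 + p 1 ^ 2) + |p 2| := by
  simp [coneSeminorm, horizontalProj, EuclideanSpace.norm_eq, Fin.sum_univ_two]

theorem Bcone_subset_closedBall : Bcone ⊆ coneSeminorm.closedBall 0 1 := by
  refine convexHull_min ?_ (Seminorm.convex_closedBall _ _ _)
  rintro p (⟨hdisk, hp2⟩ | rfl | rfl)
  · simpa [coneSeminorm_apply, hp2] using hdisk
  all_goals simp [coneSeminorm_apply]

theorem gauge_Bcone_segment_circle_apex_eq_one {d : Fin 3 → ℝ} (hd : d 0 ^ 2 + d 1 ^ 2 = 1)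
    (hd2 : d 2 = 0) {t : ℝ} (ht₀ : 0 ≤ t) (ht₁ : t ≤ 1) :
    gauge Bcone (t • d + (1 - t) • ![0, 0, 1]) = 1 := by
  refine Seminorm.gauge_eq_one_of_subset_closedBall Bcone_subset_closedBall ?_ ?_
  · have hdisk : d ∈ diskSet := ⟨hd.le, hd2⟩
    exact convex_convexHull ℝ _ (subset_convexHull ℝ _ (mem_union_left _ hdisk))
      (subset_convexHull ℝ _ (mem_union_right _ (mem_insert _ _))) ht₀ (sub_nonneg.2 ht₁)
      (add_sub_cancel _ _)
  · have hhor : (t * d 0) ^ 2 + (t * d 1) ^ 2 = t ^ 2 := by linear_combination t ^ 2 * hd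
    rw [coneSeminorm_apply]
    simp only [Pi.add_apply, Pi.smul_apply, smul_eq_mul, hd2, Matrix.cons_val, mul_zero,
      add_zero, mul_one, zero_add]
    rw [hhor, Real.sqrt_sq ht₀, abs_of_nonneg (sub_nonneg.2 ht₁), add_sub_cancel]

theorem gauge_Bcone_eq_one_of_mem_circle {d : Fin 3 → ℝ} (hd : d 0 ^ 2 + d 1 ^ 2 = 1)
    (hd2 : d 2 = 0) : gauge Bcone d = 1 := by
  simpa using gauge_Bcone_segment_circle_apex_eq_one hd hd2 zero_le_one le_rfl

theorem vT_sq_add_sq (i : Fin 3) : vT i 0 ^ 2 + vT i 1 ^ 2 = 1 := by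
  fin_cases i <;> norm_num [vT, div_pow]

theorem vT_apply_two (i : Fin 3) : vT i 2 = 0 := by
  fin_cases i <;> rfl

theorem vT_dist_sq {i j : Fin 3} (hij : i ≠ j) :
    (vT i 0 - vT j 0) ^ 2 + (vT i 1 - vT j 1) ^ 2 = 3 := by
  fin_cases i <;> fin_cases j <;> simp_all [vT] <;> ring_nf <;> norm_num

theorem wT_eq (i : Fin 3) :
    wT i = (1 / √3) • vT i + (1 - 1 / √3) • ![0, 0, 1] := by
  have h3 : √3 ≠ 0 := by positivity
  ext k
  fin_cases k <;> simp [wT]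
  field_simp

theorem wT_sub_wT (i j : Fin 3) : wT i - wT j = (1 / √3) • (vT i - vT j) := by
  simp only [wT, smul_sub]
  abel

/-- The triangle `T⋆` is inscribed in `B` and has side length 1 in the gauge norm. -/
theorem triangle_Tstar_inscribed_side_one :
    (∀ i, gauge Bcone (wT i) = 1) ∧
    (∀ i j, i ≠ j → gauge Bcone (wT i - wT j) = 1) := by
  have hscale₀ : 0 ≤ 1 / √3 := by positivity
  have hscale₁ : 1 / √3 ≤ 1 := by
    rw [div_le_one (by positivity)]
    exact Real.one_le_sqrt.2 (by norm_num)
  refine ⟨fun i => ?_, fun i j hij => ?_⟩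
  · rw [wT_eq]
    exact gauge_Bcone_segment_circle_apex_eq_one (vT_sq_add_sq i) (vT_apply_two i)
      hscale₀ hscale₁
  · rw [wT_sub_wT]
    refine gauge_Bcone_eq_one_of_mem_circle ?_ ?_
    · simp only [Pi.smul_apply, Pi.sub_apply, smul_eq_mul, mul_pow, ← mul_add, vT_dist_sq hij]
      field_simp
      norm_num
    · simp [vT_apply_two]
end

section
/- Let B = conv((B²₂ × {0}) ∪ {(0,0,±1)}) ⊂ ℝ³ with gauge norm ‖·‖_B. Let T* = (1/√3)·T + (0, 0, (√3-1)/√3), where T has vertices (√3/2, -1/2, 0), (-√3/2, -1/2, 0), (0, 1, 0), and let S = conv({0} ∪ vertices(T*)). Then S is an equilateral tetrahedron in ‖·‖_B: all six pairwise distances among its four vertices equal 1. -/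
open Set

/-!
The polar body of `B` is the cylinder `{c | c₀² + c₁² ≤ 1, |c₂| ≤ 1}`, so every such `c` gives a
linear functional `w ↦ c ⬝ᵥ w` bounded by `1` on `B`, and hence a lower bound for `‖·‖_B`.
Every edge vector of `S` lies on a segment `[u, (0,0,1)] ⊆ B` with `u` on the unit circle of the
horizontal plane: `wᵢ - 0` with `u = vᵢ`, and `wᵢ - wⱼ = (vᵢ - vⱼ)/√3` is itself such a `u` since
`|vᵢ - vⱼ| = √3`. On that segment the functional of `c = (u₀, u₁, 1)` is identically `1`.
-/

section Gauge

open Pointwise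

variable {E : Type*} [AddCommGroup E] [Module ℝ E] {s : Set E} {x : E}

theorem le_gauge_of_forall_le_one (f : E →ₗ[ℝ] ℝ) (hf : ∀ w ∈ s, f w ≤ 1)
    (hx : ∃ r : ℝ, 0 < r ∧ x ∈ r • s) : f x ≤ gauge s x := by
  obtain ⟨r, hr, hxr⟩ := hx
  rw [gauge_def]
  refine le_csInf ⟨r, hr, hxr⟩ ?_
  rintro t ⟨ht, w, hw, rfl⟩
  rw [map_smul, smul_eq_mul]
  simpa using mul_le_mul_of_nonneg_left (hf w hw) ht.le

theorem gauge_eq_one_of_mem_of_forall_le_one (f : E →ₗ[ℝ] ℝ) (hf : ∀ w ∈ s, f w ≤ 1)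
    (hx : x ∈ s) (hfx : f x = 1) : gauge s x = 1 :=
  le_antisymm (gauge_le_one_of_mem hx)
    (hfx ▸ le_gauge_of_forall_le_one f hf ⟨1, one_pos, by rwa [one_smul]⟩)

end Gauge

open Matrix

def circleSet : Set (Fin 3 → ℝ) := {p | p 0 ^ 2 + p 1 ^ 2 = 1 ∧ p 2 = 0}

theorem dotProduct_le_one_of_mem_Bcone {c w : Fin 3 → ℝ} (hc : c 0 ^ 2 + c 1 ^ 2 ≤ 1)
    (hc₂ : |c 2| ≤ 1) (hw : w ∈ Bcone) : c ⬝ᵥ w ≤ 1 := by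
  refine convexHull_min ?_ (convex_halfSpace_le (dotProductBilin ℝ ℝ c).isLinear 1) hw
  rintro p (⟨hp, hp₂⟩ | hp | hp)
  · simp only [Set.mem_ofPred_eq, dotProductBilin_apply_apply, vec3_dotProduct, hp₂]
    nlinarith [sq_nonneg (c 0 - p 0), sq_nonneg (c 1 - p 1)]
  all_goals
    subst hp
    simp only [Set.mem_ofPred_eq, dotProductBilin_apply_apply, vec3_dotProduct,
      cons_val_zero, cons_val_one, cons_val_two]
    norm_num
    linarith [abs_le.1 hc₂]

theorem gauge_Bcone_eq_one_of_mem_segment {u x : Fin 3 → ℝ} (hu : u ∈ circleSet)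
    (hx : x ∈ segment ℝ u ![0, 0, 1]) : gauge Bcone x = 1 := by
  have huB : u ∈ Bcone := subset_convexHull ℝ _ (Or.inl ⟨hu.1.le, hu.2⟩)
  have heB : ![0, 0, 1] ∈ Bcone := subset_convexHull ℝ _ (Or.inr (by simp))
  have hxB : x ∈ Bcone := (convex_convexHull ℝ _).segment_subset huB heB hx
  refine gauge_eq_one_of_mem_of_forall_le_one (dotProductBilin ℝ ℝ ![u 0, u 1, 1])
    (fun w hw => dotProduct_le_one_of_mem_Bcone (by simpa using hu.1.le) (by simp) hw) hxB ?_
  obtain ⟨a, b, -, -, hab, rfl⟩ := hx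
  simp only [dotProductBilin_apply_apply, vec3_dotProduct, Pi.add_apply, Pi.smul_apply,
    smul_eq_mul, cons_val_zero, cons_val_one, cons_val_two, tail_cons, head_cons, hu.2]
  linear_combination a * hu.1 + hab

theorem vT_mem_circleSet (i : Fin 3) : vT i ∈ circleSet := by
  have h3 : Real.sqrt 3 ^ 2 = 3 := Real.sq_sqrt (by norm_num)
  fin_cases i <;> refine ⟨?_, rfl⟩ <;> norm_num [vT] <;> linarith

theorem wT_mem_segment (i : Fin 3) : wT i ∈ segment ℝ (vT i) ![0, 0, 1] := by
  have h3 : 1 < Real.sqrt 3 := by rw [Real.lt_sqrt zero_le_one]; norm_num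
  refine ⟨1 / Real.sqrt 3, (Real.sqrt 3 - 1) / Real.sqrt 3, by positivity,
    div_nonneg (by linarith) (by positivity), by field_simp; ring, ?_⟩
  funext k
  fin_cases k <;> simp [wT]

theorem wT_sub_wT_mem_circleSet {i j : Fin 3} (hij : i ≠ j) : wT i - wT j ∈ circleSet := by
  have h3 : Real.sqrt 3 ^ 2 = 3 := Real.sq_sqrt (by norm_num)
  fin_cases i <;> fin_cases j <;> first | exact absurd rfl hij | refine ⟨?_, by simp [wT, vT]⟩
  all_goals norm_num [wT, vT]; field_simp; norm_num [h3]

/-- The tetrahedron `S = conv({0} ∪ T⋆)` is equilateral: all six pairwise distances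
among its four vertices equal 1 in the gauge norm of `B`. -/
theorem tetrahedron_S_equilateral :
    (∀ i, gauge Bcone (wT i - 0) = 1) ∧
    (∀ i j, i ≠ j → gauge Bcone (wT i - wT j) = 1) := by
  refine ⟨fun i => ?_, fun i j hij => ?_⟩
  · rw [sub_zero]
    exact gauge_Bcone_eq_one_of_mem_segment (vT_mem_circleSet i) (wT_mem_segment i)
  · exact gauge_Bcone_eq_one_of_mem_segment (wT_sub_wT_mem_circleSet hij) (left_mem_segment ℝ _ _)
end

section
/- Let ‖·‖ be any norm on ℝ². Then there exists an equilateral triangle inscribed in the unit ball B: three points x₁, x₂, x₃ with ‖x_i‖ = 1 for all i and ‖x₁ - x₂‖ = ‖x₂ - x₃‖ = ‖x₁ - x₃‖. -/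
/-!
Parametrize the unit sphere by the antipodal curve `γ θ = normalize (cos θ • e₁ + sin θ • e₂)`
and fix the vertex `γ 0`. Along each of the two half-arcs from `γ 0` to `γ π = -γ 0` the distance
to `γ 0` grows monotonically from `0` to `2`, because a normalized positive combination of two
unit vectors `x, z` is at most as far from `x` as `z` is. Pair points `γ t`, `γ (-s)` of the two
half-arcs at equal distance from `γ 0`: the third side `‖γ t - γ (-s)‖` is `2` for an antipodal
pair and `0` at `t = s = π`, so by the intermediate value theorem it equals the other two sides.
The distances may be constant on subintervals, so the pairing is first made continuous by adding
`δ * t` to both of them; the exact triangle is then recovered by compactness as `δ → 0`.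
-/

open Set Filter Real NormedSpace

theorem exists_orderIso_eqOn_add_mul {g : ℝ → ℝ} {a b δ : ℝ} (hab : a ≤ b)
    (hg : ContinuousOn g (Icc a b)) (hgm : MonotoneOn g (Icc a b)) (hδ : 0 < δ) :
    ∃ G : ℝ ≃o ℝ, EqOn G (fun σ => g σ + δ * σ) (Icc a b) := by
  set g' : ℝ → ℝ := fun σ => g (projIcc a b hab σ)
  have hg'm : Monotone g' := fun σ τ hστ =>
    hgm (projIcc a b hab σ).2 (projIcc a b hab τ).2 (monotone_projIcc hab hστ)
  have hg'c : Continuous g' :=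
    hg.comp_continuous (continuous_subtype_val.comp continuous_projIcc) fun σ =>
      (projIcc a b hab σ).2
  have hg'_mem (σ : ℝ) : g' σ ∈ Icc (g a) (g b) :=
    ⟨hgm (left_mem_Icc.2 hab) (projIcc a b hab σ).2 (projIcc a b hab σ).2.1,
      hgm (projIcc a b hab σ).2 (right_mem_Icc.2 hab) (projIcc a b hab σ).2.2⟩
  have hG : StrictMono fun σ => g' σ + δ * σ :=
    hg'm.add_strictMono (strictMono_mul_left_of_pos hδ)
  have hsurj : Function.Surjective fun σ => g' σ + δ * σ :=
    (hg'c.add (continuous_const.mul continuous_id)).surjective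
      (tendsto_atTop_add_left_of_le _ _ (fun σ => (hg'_mem σ).1)
        (tendsto_id.const_mul_atTop hδ))
      (tendsto_atBot_add_left_of_ge _ _ (fun σ => (hg'_mem σ).2)
        (tendsto_id.const_mul_atBot hδ))
  refine ⟨StrictMono.orderIsoOfSurjective _ hG hsurj, fun σ hσ => ?_⟩
  simp [g', projIcc_of_mem hab hσ]

section RealCore

variable {f g : ℝ → ℝ} {h : ℝ → ℝ → ℝ} {L : ℝ}

theorem exists_approx_matching {ε : ℝ} (hL : 0 < L) (hε : 0 < ε)
    (hf : ContinuousOn f (Icc 0 L)) (hg : ContinuousOn g (Icc 0 L))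
    (hfm : MonotoneOn f (Icc 0 L)) (hgm : MonotoneOn g (Icc 0 L))
    (h₀ : f 0 = g 0) (h_L : f L = g L) :
    ∃ σ : ℝ → ℝ, ContinuousOn σ (Icc 0 L) ∧ MapsTo σ (Icc 0 L) (Icc 0 L) ∧ σ L = L ∧
      ∀ t ∈ Icc 0 L, |f t - g (σ t)| ≤ ε := by
  set δ := ε / L
  have hδ : 0 < δ := div_pos hε hL
  obtain ⟨G, hG⟩ := exists_orderIso_eqOn_add_mul hL.le hg hgm hδ
  have hG₀ : G 0 = f 0 := by simpa [h₀] using hG (left_mem_Icc.2 hL.le)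
  have hG_L : G L = f L + δ * L := by simpa [h_L] using hG (right_mem_Icc.2 hL.le)
  set σ : ℝ → ℝ := fun t => G.symm (f t + δ * t)
  have hmaps : MapsTo σ (Icc 0 L) (Icc 0 L) := by
    intro t ht
    have := hfm (left_mem_Icc.2 hL.le) ht ht.1
    have := hfm ht (right_mem_Icc.2 hL.le) ht.2
    constructor
    · rw [G.le_symm_apply, hG₀]; nlinarith [ht.1]
    · rw [G.symm_apply_le, hG_L]; nlinarith [ht.2]
  refine ⟨σ, G.symm.continuous.comp_continuousOn (hf.add (continuousOn_const.mul continuousOn_id)),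
    hmaps, by simp [σ, ← hG_L], fun t ht => ?_⟩
  have hmatch : g (σ t) + δ * σ t = f t + δ * t :=
    (hG (hmaps ht)).symm.trans (G.apply_symm_apply _)
  calc |f t - g (σ t)| = δ * |σ t - t| := by
        rw [show f t - g (σ t) = δ * (σ t - t) by linarith, abs_mul, abs_of_pos hδ]
    _ ≤ δ * L := by
        gcongr
        exact abs_sub_le_of_nonneg_of_le (hmaps ht).1 (hmaps ht).2 ht.1 ht.2
    _ = ε := div_mul_cancel₀ ε hL.ne'

theorem exists_approx_equilateral {m ε : ℝ} (hL : 0 < L) (hε : 0 < ε)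
    (hf : ContinuousOn f (Icc 0 L)) (hg : ContinuousOn g (Icc 0 L))
    (hh : ContinuousOn (fun p : ℝ × ℝ => h p.1 p.2) (Icc 0 L ×ˢ Icc 0 L))
    (hfm : MonotoneOn f (Icc 0 L)) (hgm : MonotoneOn g (Icc 0 L))
    (h₀ : f 0 = g 0) (h_L : f L = g L)
    (h_start : ∀ t ∈ Icc 0 L, f t ≤ h t (L - t)) (h_end : h L L ≤ f L)
    (hm : ∀ t ∈ Icc 0 L, m ≤ max (f t) (g (L - t))) :
    ∃ t ∈ Icc 0 L, ∃ s ∈ Icc 0 L, m - ε ≤ f t ∧ h t s = f t ∧ |f t - g s| ≤ ε := by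
  obtain ⟨σ, hσc, hσ_maps, hσ_L, hσ⟩ := exists_approx_matching hL hε hf hg hfm hgm h₀ h_L
  obtain ⟨t₁, ht₁, hσt₁⟩ : ∃ t₁ ∈ Icc 0 L, σ t₁ + t₁ = L := by
    refine intermediate_value_Icc (f := fun t => σ t + t) hL.le (hσc.add continuousOn_id)
      ⟨?_, ?_⟩
    · simpa using (hσ_maps (left_mem_Icc.2 hL.le)).2
    · simp only [hσ_L]; linarith
  have hσt₁' : σ t₁ = L - t₁ := by linarith
  have hft₁ : m - ε ≤ f t₁ := by
    have := abs_le.1 (hσ t₁ ht₁)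
    rw [hσt₁'] at this
    rcases le_max_iff.1 (hm t₁ ht₁) with hmax | hmax <;> linarith
  have hψ : ContinuousOn (fun t => h t (σ t) - f t) (Icc t₁ L) :=
    ((hh.comp (continuousOn_id.prodMk hσc) fun t ht => ⟨ht, hσ_maps ht⟩).sub hf).mono
      (Icc_subset_Icc_left ht₁.1)
  obtain ⟨t₂, ht₂, hψt₂⟩ := intermediate_value_Icc' (f := fun t => h t (σ t) - f t) ht₁.2 hψ
    (show (0 : ℝ) ∈ Icc _ _ from
      ⟨by simp only [hσ_L]; linarith, by simp only [hσt₁']; linarith [h_start t₁ ht₁]⟩)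
  have ht₂' : t₂ ∈ Icc 0 L := ⟨ht₁.1.trans ht₂.1, ht₂.2⟩
  exact ⟨t₂, ht₂', σ t₂, hσ_maps ht₂', hft₁.trans (hfm ht₁ ht₂' ht₂.1),
    by linarith [show h t₂ (σ t₂) - f t₂ = 0 from hψt₂], hσ t₂ ht₂'⟩

theorem exists_pos_equilateral (hL : 0 < L)
    (hf : ContinuousOn f (Icc 0 L)) (hg : ContinuousOn g (Icc 0 L))
    (hh : ContinuousOn (fun p : ℝ × ℝ => h p.1 p.2) (Icc 0 L ×ˢ Icc 0 L))
    (hfm : MonotoneOn f (Icc 0 L)) (hgm : MonotoneOn g (Icc 0 L))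
    (h₀ : f 0 = g 0) (h_L : f L = g L)
    (h_start : ∀ t ∈ Icc 0 L, f t ≤ h t (L - t)) (h_end : h L L ≤ f L)
    (hpos : ∀ t ∈ Icc 0 L, 0 < max (f t) (g (L - t))) :
    ∃ t ∈ Icc 0 L, ∃ s ∈ Icc 0 L, 0 < f t ∧ f t = g s ∧ h t s = f t := by
  have hrefl : MapsTo (fun t => L - t) (Icc 0 L) (Icc 0 L) := fun t ht =>
    ⟨by linarith [ht.2], by linarith [ht.1]⟩
  obtain ⟨t₀, ht₀, hmin⟩ := isCompact_Icc.exists_isMinOn (nonempty_Icc.2 hL.le)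
    (f := fun t => max (f t) (g (L - t)))
    (hf.sup (hg.comp (continuousOn_const.sub continuousOn_id) hrefl))
  set m := max (f t₀) (g (L - t₀))
  have hm : ∀ t ∈ Icc 0 L, m ≤ max (f t) (g (L - t)) := fun t ht => isMinOn_iff.1 hmin t ht
  have hm_pos : 0 < m := hpos t₀ ht₀
  set S : Set (ℝ × ℝ) := Icc 0 L ×ˢ Icc 0 L
  have hf₁ : ContinuousOn (fun p : ℝ × ℝ => f p.1) S := hf.comp continuousOn_fst fun p hp => hp.1
  -- the bound `m / 2 ≤ f p.1` keeps the limit triangle nondegenerate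
  set K : Set (ℝ × ℝ) := {p ∈ {p ∈ S | m / 2 ≤ f p.1} | h p.1 p.2 = f p.1}
  have hK : IsCompact K := by
    refine (isCompact_Icc.prod isCompact_Icc).of_isClosed_subset ?_ fun p hp => hp.1.1
    have hS : IsClosed S := isClosed_Icc.prod isClosed_Icc
    have hS' := hS.isClosed_le (continuousOn_const (c := m / 2)) hf₁
    exact hS'.isClosed_eq (hh.mono fun p hp => hp.1) (hf₁.mono fun p hp => hp.1)
  have happrox : ∀ ε > 0, ε ≤ m / 2 → ∃ p ∈ K, |f p.1 - g p.2| ≤ ε := by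
    intro ε hε hεm
    obtain ⟨t, ht, s, hs, hft, hts, hfg⟩ :=
      exists_approx_equilateral hL hε hf hg hh hfm hgm h₀ h_L h_start h_end hm
    exact ⟨(t, s), ⟨⟨⟨ht, hs⟩, by linarith⟩, hts⟩, hfg⟩
  obtain ⟨p₀, hp₀, -⟩ := happrox (m / 2) (by positivity) le_rfl
  obtain ⟨p, hp, hp_min⟩ := hK.exists_isMinOn (f := fun p => |f p.1 - g p.2|) ⟨p₀, hp₀⟩
    (((hf₁.sub (hg.comp continuousOn_snd fun p hp => hp.2)).abs).mono fun p hp => hp.1.1)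
  have hfg : |f p.1 - g p.2| = 0 := by
    refine le_antisymm (le_of_forall_pos_le_add fun ε hε => ?_) (abs_nonneg _)
    obtain ⟨q, hq, hqε⟩ := happrox (min ε (m / 2)) (by positivity) (min_le_right _ _)
    linarith [isMinOn_iff.1 hp_min q hq, min_le_left ε (m / 2)]
  exact ⟨p.1, hp.1.1.1, p.2, hp.1.1.2, by linarith [hp.1.2], by linarith [abs_eq_zero.1 hfg], hp.2⟩

end RealCore

section Geometry

variable {X : Type*} [NormedAddCommGroup X] [NormedSpace ℝ X]

theorem norm_sub_normalize_le (q : X) : ‖q - normalize q‖ ≤ |‖q‖ - 1| := by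
  rcases eq_or_ne q 0 with rfl | hq
  · simp
  apply le_of_eq
  calc ‖q - normalize q‖ = ‖(1 - ‖q‖⁻¹) • q‖ := by rw [NormedSpace.normalize, sub_smul, one_smul]
    _ = |‖q‖ - 1| := by
      rw [norm_smul, Real.norm_eq_abs, ← abs_norm q, ← abs_mul, abs_norm, sub_mul,
        inv_mul_cancel₀ (norm_ne_zero_iff.2 hq), one_mul]

theorem norm_sub_normalize_le_of_mem_segment {x y z : X} (hx : ‖x‖ = 1) (hz : ‖z‖ = 1)
    (hy : y ∈ segment ℝ x z) : ‖x - normalize y‖ ≤ ‖x - z‖ := by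
  obtain ⟨a, b, ha, hb, hab, rfl⟩ := hy
  set y := a • x + b • z
  have hxy : x - y = b • (x - z) := by linear_combination (norm := module) -hab • x
  have hzy : z - y = a • (z - x) := by linear_combination (norm := module) -hab • z
  have hy_le : ‖y‖ ≤ 1 := by
    calc ‖y‖ ≤ ‖a • x‖ + ‖b • z‖ := norm_add_le _ _
      _ = 1 := by rw [norm_smul, norm_smul, hx, hz, Real.norm_of_nonneg ha,
        Real.norm_of_nonneg hb, mul_one, mul_one, hab]
  have hdefect : 1 - ‖y‖ ≤ a * ‖x - z‖ := by
    have := norm_sub_norm_le z y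
    rwa [hz, hzy, norm_smul, Real.norm_of_nonneg ha, norm_sub_rev] at this
  have hy_normalize : ‖y - normalize y‖ ≤ 1 - ‖y‖ :=
    (norm_sub_normalize_le y).trans_eq (by rw [abs_sub_comm, abs_of_nonneg (by linarith)])
  calc ‖x - normalize y‖ ≤ ‖x - y‖ + ‖y - normalize y‖ := norm_sub_le_norm_sub_add_norm_sub _ _ _
    _ ≤ b * ‖x - z‖ + a * ‖x - z‖ := by
        rw [hxy, norm_smul, Real.norm_of_nonneg hb]; linarith
    _ = ‖x - z‖ := by rw [← add_mul, add_comm, hab, one_mul]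

theorem norm_sub_normalize_smul_add_smul_le {x z : X} {a b : ℝ} (hx : ‖x‖ = 1) (hz : ‖z‖ = 1)
    (ha : 0 ≤ a) (hb : 0 ≤ b) (hab : a • x + b • z ≠ 0) :
    ‖x - normalize (a • x + b • z)‖ ≤ ‖x - z‖ := by
  have hsum : 0 < a + b := by
    refine (add_nonneg ha hb).lt_of_ne fun h => hab ?_
    obtain ⟨rfl, rfl⟩ := (add_eq_zero_iff_of_nonneg ha hb).1 h.symm
    simp
  rw [← normalize_smul_of_pos (inv_pos.2 hsum)]
  refine norm_sub_normalize_le_of_mem_segment hx hz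
    ⟨a / (a + b), b / (a + b), by positivity, by positivity, by field_simp, ?_⟩
  rw [smul_add, smul_smul, smul_smul, div_eq_inv_mul, div_eq_inv_mul]

noncomputable def sphereCurve (e₁ e₂ : X) (θ : ℝ) : X := normalize (cos θ • e₁ + sin θ • e₂)

section sphereCurve

variable {e₁ e₂ : X}

theorem cos_smul_add_sin_smul_ne_zero (he : LinearIndependent ℝ ![e₁, e₂]) (θ : ℝ) :
    cos θ • e₁ + sin θ • e₂ ≠ 0 := fun h => by
  obtain ⟨hcos, hsin⟩ := LinearIndependent.pair_iff.1 he _ _ h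
  simpa [hcos, hsin] using sin_sq_add_cos_sq θ

theorem norm_sphereCurve (he : LinearIndependent ℝ ![e₁, e₂]) (θ : ℝ) :
    ‖sphereCurve e₁ e₂ θ‖ = 1 :=
  norm_normalize (cos_smul_add_sin_smul_ne_zero he θ)

theorem continuous_sphereCurve (he : LinearIndependent ℝ ![e₁, e₂]) :
    Continuous (sphereCurve e₁ e₂) := by
  have hw : Continuous fun θ => cos θ • e₁ + sin θ • e₂ := by fun_prop
  exact (hw.norm.inv₀ fun θ => norm_ne_zero_iff.2 (cos_smul_add_sin_smul_ne_zero he θ)).smul hw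

theorem sphereCurve_add_pi (θ : ℝ) : sphereCurve e₁ e₂ (θ + π) = -sphereCurve e₁ e₂ θ := by
  simp only [sphereCurve, cos_add_pi, sin_add_pi, neg_smul, ← neg_add, normalize_neg]

theorem sphereCurve_neg (θ : ℝ) : sphereCurve e₁ e₂ (-θ) = sphereCurve e₁ (-e₂) θ := by
  simp only [sphereCurve, cos_neg, sin_neg, neg_smul, smul_neg]

theorem monotoneOn_norm_sub_sphereCurve (he : LinearIndependent ℝ ![e₁, e₂]) :
    MonotoneOn (fun t => ‖sphereCurve e₁ e₂ 0 - sphereCurve e₁ e₂ t‖) (Icc 0 π) := by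
  intro s hs t ht hst
  have hnorm := norm_sphereCurve he
  rcases ht.2.eq_or_lt with rfl | htπ
  · calc ‖sphereCurve e₁ e₂ 0 - sphereCurve e₁ e₂ s‖
        ≤ ‖sphereCurve e₁ e₂ 0‖ + ‖sphereCurve e₁ e₂ s‖ := norm_sub_le _ _
      _ = ‖sphereCurve e₁ e₂ 0 - sphereCurve e₁ e₂ π‖ := by
        rw [← zero_add π, sphereCurve_add_pi, sub_neg_eq_add, ← two_smul ℝ, norm_smul, hnorm,
          hnorm, Real.norm_two]; norm_num
  rcases (hs.1.trans hst).eq_or_lt with rfl | ht₀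
  · rw [le_antisymm hst hs.1]
  set w : ℝ → X := fun θ => cos θ • e₁ + sin θ • e₂
  have hsin_t : 0 < sin t := sin_pos_of_pos_of_lt_pi ht₀ htπ
  have hsine : sin t • w s = sin (t - s) • w 0 + sin s • w t := by
    simp only [w, sin_sub, cos_zero, sin_zero]
    module
  have hw (θ : ℝ) : w θ = ‖w θ‖ • sphereCurve e₁ e₂ θ := (norm_smul_normalize _).symm
  have hcone : sin t • w s = (sin (t - s) * ‖w 0‖) • sphereCurve e₁ e₂ 0
      + (sin s * ‖w t‖) • sphereCurve e₁ e₂ t := by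
    rw [hsine, mul_smul, mul_smul, ← hw, ← hw]
  have hs_eq : sphereCurve e₁ e₂ s = normalize (sin t • w s) :=
    (normalize_smul_of_pos hsin_t _).symm
  show ‖_ - sphereCurve e₁ e₂ s‖ ≤ _
  rw [hs_eq, hcone]
  refine norm_sub_normalize_smul_add_smul_le (hnorm 0) (hnorm t)
    (mul_nonneg (sin_nonneg_of_nonneg_of_le_pi (by linarith) (by linarith [hs.1])) (norm_nonneg _))
    (mul_nonneg (sin_nonneg_of_nonneg_of_le_pi hs.1 (by linarith)) (norm_nonneg _)) ?_
  rw [← hcone]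
  exact smul_ne_zero hsin_t.ne' (cos_smul_add_sin_smul_ne_zero he s)

theorem monotoneOn_norm_sub_sphereCurve_neg (he : LinearIndependent ℝ ![e₁, e₂]) :
    MonotoneOn (fun t => ‖sphereCurve e₁ e₂ 0 - sphereCurve e₁ e₂ (-t)‖) (Icc 0 π) := by
  have he' : LinearIndependent ℝ ![e₁, -e₂] := LinearIndependent.pair_iff.2 fun s t h => by
    obtain ⟨hs, ht⟩ := LinearIndependent.pair_iff.1 he s (-t) (by rwa [neg_smul, ← smul_neg])
    exact ⟨hs, neg_eq_zero.1 ht⟩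
  have h₀ : sphereCurve e₁ e₂ 0 = sphereCurve e₁ (-e₂) 0 := by
    rw [← sphereCurve_neg, neg_zero]
  simpa only [sphereCurve_neg, h₀] using monotoneOn_norm_sub_sphereCurve he'

end sphereCurve

theorem exists_equilateral_of_antipodal_curve {γ : ℝ → X} (hγ : Continuous γ)
    (hnorm : ∀ θ, ‖γ θ‖ = 1) (hanti : ∀ θ, γ (θ + π) = -γ θ)
    (hf : MonotoneOn (fun t => ‖γ 0 - γ t‖) (Icc 0 π))
    (hg : MonotoneOn (fun t => ‖γ 0 - γ (-t)‖) (Icc 0 π)) :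
    ∃ x₁ x₂ x₃ : X, ‖x₁‖ = 1 ∧ ‖x₂‖ = 1 ∧ ‖x₃‖ = 1 ∧
      ∃ d : ℝ, 0 < d ∧ ‖x₁ - x₂‖ = d ∧ ‖x₂ - x₃‖ = d ∧ ‖x₁ - x₃‖ = d := by
  have hanti' (θ : ℝ) : γ (θ - π) = -γ θ := by rw [← neg_neg (γ (θ - π)), ← hanti, sub_add_cancel]
  have hγ_pi : γ π = -γ 0 := by simpa using hanti 0
  have hγ_neg_pi : γ (-π) = -γ 0 := by simpa using hanti' 0
  have hdiam (θ : ℝ) : ‖γ θ - -γ θ‖ = 2 := by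
    rw [sub_neg_eq_add, ← two_smul ℝ, norm_smul, hnorm, Real.norm_two, mul_one]
  have hle (θ φ : ℝ) : ‖γ θ - γ φ‖ ≤ 2 := by
    linarith [norm_sub_le (γ θ) (γ φ), hnorm θ, hnorm φ]
  obtain ⟨t, ht, s, hs, hpos, hfg, hh⟩ := exists_pos_equilateral (h := fun t s => ‖γ t - γ (-s)‖)
    pi_pos (by fun_prop) (by fun_prop) (by fun_prop) hf hg (by simp)
    (by simp only [hγ_pi, hγ_neg_pi])
    (fun t _ => by simp only [neg_sub, hanti', hdiam, hle])
    (by simp [hγ_pi, hγ_neg_pi])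
    (fun t _ => by
      have := norm_sub_le_norm_sub_add_norm_sub (γ t) (γ 0) (-γ t)
      simp only [neg_sub, hanti']
      rw [hdiam, norm_sub_rev] at this
      linarith [le_max_left ‖γ 0 - γ t‖ ‖γ 0 - -γ t‖, le_max_right ‖γ 0 - γ t‖ ‖γ 0 - -γ t‖])
  exact ⟨γ 0, γ t, γ (-s), hnorm _, hnorm _, hnorm _, _, hpos, rfl, hh, hfg.symm⟩

end Geometry

/-- For any norm on a 2-dimensional real vector space, there is an equilateral triangle
inscribed in the unit ball: three unit vectors with equal positive pairwise distances. -/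
theorem inscribed_equilateral_triangle (X : Type*) [NormedAddCommGroup X]
    [NormedSpace ℝ X] (hdim : Module.finrank ℝ X = 2) :
    ∃ x₁ x₂ x₃ : X, ‖x₁‖ = 1 ∧ ‖x₂‖ = 1 ∧ ‖x₃‖ = 1 ∧
      ∃ d : ℝ, 0 < d ∧ ‖x₁ - x₂‖ = d ∧ ‖x₂ - x₃‖ = d ∧ ‖x₁ - x₃‖ = d := by
  have : FiniteDimensional ℝ X := Module.finite_of_finrank_eq_succ hdim
  let b := Module.finBasisOfFinrankEq ℝ X hdim
  have he : LinearIndependent ℝ ![b 0, b 1] := by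
    convert b.linearIndependent
    ext i
    fin_cases i <;> rfl
  exact exists_equilateral_of_antipodal_curve (continuous_sphereCurve he) (norm_sphereCurve he)
    sphereCurve_add_pi (monotoneOn_norm_sub_sphereCurve he) (monotoneOn_norm_sub_sphereCurve_neg he)
end
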